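/- Suppose H_1, ..., H_r are k-cyclic graphs on n−p vertices that are the unique maximizers (all attaining the common maximum value) of M_1 among k-cyclic graphs on n−p vertices. If G is a p-quasi k-cyclic graph on n vertices that is not isomorphic to any H_i + K_p, then M_1(G) < M_1(H_1 + K_p). -/

import Mathlib

open scoped Classical
noncomputable def M1 {V : Type*} [Fintype V] (G : SimpleGraph V) : ℕ :=
  ∑ v, G.degree v ^ 2
noncomputable def M2 {V : Type*} [Fintype V] (G : SimpleGraph V) : ℕ :=
  ∑ e ∈ G.edgeFinset,
    Sym2.lift ⟨fun u v => G.degree u * G.degree v, fun _ _ => Nat.mul_comm _ _⟩ e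
noncomputable def numEdges {V : Type*} [Fintype V] (G : SimpleGraph V) : ℕ :=
  G.edgeFinset.card
def IsKCyclic {V : Type*} [Fintype V] (k : ℕ) (G : SimpleGraph V) : Prop :=
  G.Connected ∧ G.edgeFinset.card + 1 = Fintype.card V + k
def starGraph (n : ℕ) : SimpleGraph (Fin n) :=
  { Adj := fun u v => u ≠ v ∧ (u.val = 0 ∨ v.val = 0)
    symm := by constructor; intro u v h; exact ⟨h.1.symm, h.2.symm⟩
    loopless := by constructor; intro u h; exact h.1 rfl }
def joinG {α β : Type*} (G : SimpleGraph α) (H : SimpleGraph β) : SimpleGraph (α ⊕ β) :=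
  { Adj := fun u v =>
      match u, v with
      | Sum.inl a, Sum.inl b => G.Adj a b
      | Sum.inr a, Sum.inr b => H.Adj a b
      | Sum.inl _, Sum.inr _ => True
      | Sum.inr _, Sum.inl _ => True
    symm := by
      constructor
      intro u v h
      cases u <;> cases v <;> simp_all [SimpleGraph.adj_comm]
    loopless := by
      constructor
      intro u h
      cases u <;> simp_all }
noncomputable def deleteS {V : Type*} [Fintype V] (G : SimpleGraph V) (S : Finset V) :
    SimpleGraph ↥((↑S : Set V)ᶜ) :=
  G.induce ((↑S : Set V)ᶜ)
def QuasiKCyclic {V : Type*} [Fintype V] (k p : ℕ) (G : SimpleGraph V) : Prop :=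
  G.Connected ∧
  (∃ S : Finset V, S.card = p ∧ IsKCyclic k (deleteS G S)) ∧
  ∀ S' : Finset V, IsKCyclic k (deleteS G S') → p ≤ S'.card
def Un3 (n : ℕ) : SimpleGraph (Fin n) :=
  { Adj := fun u v => u ≠ v ∧ (u.val = 0 ∨ v.val = 0 ∨ (u.val ≤ 2 ∧ v.val ≤ 2))
    symm := by constructor; intro u v h; tauto
    loopless := by constructor; intro u h; exact h.1 rfl }
def Bn33 (n : ℕ) : SimpleGraph (Fin n) :=
  { Adj := fun u v => u ≠ v ∧ (u.val = 0 ∨ v.val = 0 ∨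
      (1 ≤ u.val ∧ u.val ≤ 2 ∧ 1 ≤ v.val ∧ v.val ≤ 2) ∨
      (3 ≤ u.val ∧ u.val ≤ 4 ∧ 3 ≤ v.val ∧ v.val ≤ 4))
    symm := by constructor; intro u v h; tauto
    loopless := by constructor; intro u h; exact h.1 rfl }

/-!
Pick `S` with `|S| = p` and `G - S` `k`-cyclic. Making every vertex of `S` universal can only raise
`M1`, and turns `G` into `(G - S) + K_p`. For graphs on a fixed vertex set with the same number of
edges, `M1 (· + K_p) - M1 ·` is constant, so the join preserves the order of `M1` among `k`-cyclic
graphs on `n - p` vertices. Hence either `G - S` is not one of the maximizers and the inequality is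
already strict there, or it is one of them, and then `G` is a proper subgraph of `(G - S) + K_p`
because `G` itself is not such a join.
-/

open SimpleGraph Finset

section Invariance

variable {V W : Type*} [Fintype V] [Fintype W] {G : SimpleGraph V} {G' : SimpleGraph W}

lemma SimpleGraph.Iso.M1_eq (f : G ≃g G') : M1 G = M1 G' := by
  unfold M1
  rw [← f.toEquiv.sum_comp]
  exact Finset.sum_congr rfl fun v _ => by rw [show f.toEquiv v = f v from rfl, f.degree_eq]

lemma SimpleGraph.Iso.isKCyclic {k : ℕ} (f : G ≃g G') (h : IsKCyclic k G) : IsKCyclic k G' :=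
  ⟨f.connected_iff.mp h.1, by rw [← f.card_edgeFinset_eq, ← f.card_eq]; exact h.2⟩

lemma IsKCyclic.card_edgeFinset_eq {k : ℕ} {G₁ G₂ : SimpleGraph V} (h₁ : IsKCyclic k G₁)
    (h₂ : IsKCyclic k G₂) : #G₁.edgeFinset = #G₂.edgeFinset := by
  have := h₁.2; have := h₂.2; omega

end Invariance

section Monotone

variable {V : Type*} [Fintype V]

lemma M1_mono : Monotone (M1 : SimpleGraph V → ℕ) := fun _ _ h =>
  Finset.sum_le_sum fun _ _ => Nat.pow_le_pow_left (degree_le_of_le h) 2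

lemma M1_strictMono : StrictMono (M1 : SimpleGraph V → ℕ) := fun G G' h => by
  obtain ⟨u, v, hadj, hnadj⟩ : ∃ u v, G'.Adj u v ∧ ¬ G.Adj u v := by
    by_contra! h'
    exact h.not_ge fun u v => h' u v
  have hu : G.degree u < G'.degree u := by
    refine Finset.card_lt_card ⟨fun w hw => ?_, fun hsub => hnadj ?_⟩
    · simpa using h.le (by simpa using hw)
    · simpa using hsub (by simpa using hadj)
  exact Finset.sum_lt_sum (fun _ _ => Nat.pow_le_pow_left (degree_le_of_le h.le) 2)
    ⟨u, Finset.mem_univ u, Nat.pow_lt_pow_left hu two_ne_zero⟩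

end Monotone

section Join

variable {α β : Type*}

@[simp] lemma joinG_adj_inl_inl (G : SimpleGraph α) (K : SimpleGraph β) (a b : α) :
    (joinG G K).Adj (.inl a) (.inl b) ↔ G.Adj a b := Iff.rfl

@[simp] lemma joinG_adj_inr_inr (G : SimpleGraph α) (K : SimpleGraph β) (a b : β) :
    (joinG G K).Adj (.inr a) (.inr b) ↔ K.Adj a b := Iff.rfl

@[simp] lemma joinG_adj_inl_inr (G : SimpleGraph α) (K : SimpleGraph β) (a : α) (b : β) :
    (joinG G K).Adj (.inl a) (.inr b) := trivial

@[simp] lemma joinG_adj_inr_inl (G : SimpleGraph α) (K : SimpleGraph β) (a : β) (b : α) :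
    (joinG G K).Adj (.inr a) (.inl b) := trivial

def SimpleGraph.Iso.joinG {α' β' : Type*} {G : SimpleGraph α} {G' : SimpleGraph α'}
    {K : SimpleGraph β} {K' : SimpleGraph β'} (f : G ≃g G') (g : K ≃g K') :
    joinG G K ≃g joinG G' K' where
  toEquiv := Equiv.sumCongr f.toEquiv g.toEquiv
  map_rel_iff' := by rintro (a | a) (b | b) <;> simp [f.map_rel_iff, g.map_rel_iff]

variable [Fintype α] [Fintype β]

lemma degree_joinG_inl (G : SimpleGraph α) (K : SimpleGraph β) (a : α) :
    (joinG G K).degree (.inl a) = G.degree a + Fintype.card β := by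
  have : (joinG G K).neighborFinset (.inl a) = (G.neighborFinset a).disjSum univ := by
    ext (b | b) <;> simp
  rw [← card_neighborFinset_eq_degree, this, card_disjSum, card_univ,
    card_neighborFinset_eq_degree]

lemma degree_joinG_inr (G : SimpleGraph α) (K : SimpleGraph β) (b : β) :
    (joinG G K).degree (.inr b) = K.degree b + Fintype.card α := by
  have : (joinG G K).neighborFinset (.inr b) = univ.disjSum (K.neighborFinset b) := by
    ext (a | a) <;> simp
  rw [← card_neighborFinset_eq_degree, this, card_disjSum, card_univ,
    card_neighborFinset_eq_degree, add_comm]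

lemma M1_joinG (G : SimpleGraph α) (K : SimpleGraph β) :
    M1 (joinG G K) =
      ∑ a, (G.degree a + Fintype.card β) ^ 2 + ∑ b, (K.degree b + Fintype.card α) ^ 2 := by
  simp only [M1, Fintype.sum_sum_type, degree_joinG_inl, degree_joinG_inr]

lemma sum_sq_degree_add (G : SimpleGraph α) (q : ℕ) :
    ∑ a, (G.degree a + q) ^ 2 = M1 G + 4 * q * #G.edgeFinset + Fintype.card α * q ^ 2 := by
  simp only [M1, add_sq, sum_add_distrib, ← sum_mul, ← mul_sum, sum_degrees_eq_twice_card_edges,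
    sum_const, card_univ, smul_eq_mul]
  ring

variable {G₁ G₂ : SimpleGraph α}

lemma M1_joinG_add_M1 (K : SimpleGraph β) (h : #G₁.edgeFinset = #G₂.edgeFinset) :
    M1 (joinG G₁ K) + M1 G₂ = M1 (joinG G₂ K) + M1 G₁ := by
  simp only [M1_joinG, sum_sq_degree_add, h]
  ring

lemma M1_joinG_le_M1_joinG_iff (K : SimpleGraph β) (h : #G₁.edgeFinset = #G₂.edgeFinset) :
    M1 (joinG G₁ K) ≤ M1 (joinG G₂ K) ↔ M1 G₁ ≤ M1 G₂ := by
  have := M1_joinG_add_M1 K h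
  omega

lemma M1_joinG_lt_M1_joinG_iff (K : SimpleGraph β) (h : #G₁.edgeFinset = #G₂.edgeFinset) :
    M1 (joinG G₁ K) < M1 (joinG G₂ K) ↔ M1 G₁ < M1 G₂ := by
  have := M1_joinG_add_M1 K h
  omega

end Join

section MakeUniversal

variable {V : Type*}

def makeUniversal (G : SimpleGraph V) (s : Set V) : SimpleGraph V :=
  G ⊔ fromRel fun u _ => u ∈ s

lemma le_makeUniversal (G : SimpleGraph V) (s : Set V) : G ≤ makeUniversal G s :=
  le_sup_left

noncomputable def joinInduceComplIsoMakeUniversal (G : SimpleGraph V) (s : Set V) :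
    joinG (G.induce sᶜ) (completeGraph s) ≃g makeUniversal G s where
  toEquiv := (Equiv.sumComm _ _).trans (Equiv.Set.sumCompl s)
  map_rel_iff' := by
    rintro (⟨a, ha⟩ | ⟨a, ha⟩) (⟨b, hb⟩ | ⟨b, hb⟩) <;> simp [makeUniversal] <;>
      grind [SimpleGraph.Adj.ne]

end MakeUniversal

theorem stmt19_general {n p k r : ℕ} (hr : 0 < r)
    (H : Fin r → SimpleGraph (Fin (n - p)))
    (hkcyc : ∀ i, IsKCyclic k (H i))
    (heq : ∀ i j, M1 (H i) = M1 (H j))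
    (hmax : ∀ H' : SimpleGraph (Fin (n - p)), IsKCyclic k H' →
      (¬ ∃ i, Nonempty (H' ≃g H i)) → M1 H' < M1 (H ⟨0, hr⟩))
    (G : SimpleGraph (Fin n)) (hG : QuasiKCyclic k p G)
    (hiso : ¬ ∃ i, Nonempty (G ≃g joinG (H i) (SimpleGraph.completeGraph (Fin p)))) :
    M1 G < M1 (joinG (H ⟨0, hr⟩) (SimpleGraph.completeGraph (Fin p))) := by
  obtain ⟨-, ⟨S, hS, hcyc⟩, -⟩ := hG
  obtain ⟨e₁⟩ : Nonempty (↥(↑S : Set (Fin n))ᶜ ≃ Fin (n - p)) :=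
    ⟨Fintype.equivFinOfCardEq (by rw [Fintype.card_compl_set]; simp [hS])⟩
  obtain ⟨e₂⟩ : Nonempty (↥(↑S : Set (Fin n)) ≃ Fin p) :=
    ⟨Fintype.equivFinOfCardEq (by simp [hS])⟩
  set H' := (deleteS G S).map e₁.toEmbedding
  have hH' : IsKCyclic k H' := (Iso.map e₁ _).isKCyclic (by convert hcyc)
  have hjoin : makeUniversal G S ≃g joinG H' (completeGraph (Fin p)) :=
    (joinInduceComplIsoMakeUniversal G S).symm.trans
      ((Iso.map e₁ _).joinG (Iso.completeGraph e₂))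
  have hedges := hH'.card_edgeFinset_eq (hkcyc ⟨0, hr⟩)
  by_cases hH'iso : ∃ i, Nonempty (H' ≃g H i)
  · obtain ⟨i, ⟨f⟩⟩ := hH'iso
    have hlt : G < makeUniversal G S := by
      refine (le_makeUniversal G S).lt_of_ne fun hGeq => hiso ⟨i, ⟨?_⟩⟩
      rw [hGeq]
      exact hjoin.trans (f.joinG (RelIso.refl _))
    calc M1 G < M1 (makeUniversal G S) := M1_strictMono hlt
      _ = M1 (joinG H' (completeGraph (Fin p))) := hjoin.M1_eq
      _ ≤ _ := (M1_joinG_le_M1_joinG_iff _ hedges).2 (f.M1_eq.trans (heq i _)).le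
  · calc M1 G ≤ M1 (makeUniversal G S) := M1_mono (le_makeUniversal G S)
      _ = M1 (joinG H' (completeGraph (Fin p))) := hjoin.M1_eq
      _ < _ := (M1_joinG_lt_M1_joinG_iff _ hedges).2 (hmax H' hH' hH'iso)

theorem stmt19 {n p k r : ℕ} (hr : 0 < r) (hpn : p ≤ n)
    (H : Fin r → SimpleGraph (Fin (n - p)))
    (hkcyc : ∀ i, IsKCyclic k (H i))
    (heq : ∀ i j, M1 (H i) = M1 (H j))
    (hmax : ∀ H' : SimpleGraph (Fin (n - p)), IsKCyclic k H' →
      (¬ ∃ i, Nonempty (H' ≃g H i)) → M1 H' < M1 (H ⟨0, hr⟩))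
    (G : SimpleGraph (Fin n)) (hG : QuasiKCyclic k p G)
    (hiso : ¬ ∃ i, Nonempty (G ≃g joinG (H i) (SimpleGraph.completeGraph (Fin p)))) :
    M1 G < M1 (joinG (H ⟨0, hr⟩) (SimpleGraph.completeGraph (Fin p))) :=
  stmt19_general hr H hkcyc heq hmax G hG hiso
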